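/- Let e: [0,∞) → ℝ satisfy e(t) = e_hom(t) + ∫₀^t h(t-τ)(-e_f(τ)) dτ where |e_hom(t)| ≤ C₀ e^{-ρt} with C₀, ρ > 0, h is integrable with ∫₀^∞ |h| = ‖h‖₁ < ∞, and |e_f(τ)| ≤ e^{-ω_o τ}|e_f(0)| + L_f/ω_o for all τ ≥ 0 with ω_o > 0. Then limsup_{t→∞} |e(t)| ≤ ‖h‖₁ · L_f/ω_o. -/

import Mathlib

/-!
Split the convolution at `τ = t/2`. On `[0, t/2]` the forcing is at most `|e_f(0)| + L_f/ω_o`,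
while `h(t - τ)` only sees the tail `∫_{t/2}^∞ |h|`, which tends to zero; on `[t/2, t]` the forcing
is at most `e^{-ω_o t/2}|e_f(0)| + L_f/ω_o`, tested against at most `‖h‖₁`. As `t → ∞` the
homogeneous part and both exponentials vanish, leaving `‖h‖₁ · L_f/ω_o`.
-/

open MeasureTheory Filter Topology Set

section ConvolutionBounds

variable {h f : ℝ → ℝ} {a b s t M m : ℝ}

lemma intervalIntegrable_comp_sub_of_integrableOn_Ici (hh : IntegrableOn h (Ici 0))
    (hab : a ≤ b) (hbt : b ≤ t) : IntervalIntegrable (fun τ => h (t - τ)) volume a b := by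
  have hI : IntervalIntegrable h volume (t - b) (t - a) :=
    (hh.mono_set fun x hx => by
      rw [uIcc_of_le (by linarith)] at hx
      exact le_trans (by linarith) hx.1).intervalIntegrable
  simpa using (hI.comp_sub_left t).symm

lemma abs_intervalIntegral_comp_sub_mul_le (hh : IntegrableOn h (Ici 0)) (hab : a ≤ b)
    (hbt : b ≤ t) (hM : 0 ≤ M) (hf : ∀ τ ∈ Ioc a b, |f τ| ≤ M) :
    |∫ τ in a..b, h (t - τ) * f τ| ≤ M * ∫ x in Ici (t - b), |h x| := by
  have hI := intervalIntegrable_comp_sub_of_integrableOn_Ici hh hab hbt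
  calc |∫ τ in a..b, h (t - τ) * f τ|
      ≤ ∫ τ in a..b, M * |h (t - τ)| := by
        rw [← Real.norm_eq_abs]
        refine intervalIntegral.norm_integral_le_of_norm_le hab (ae_of_all _ fun τ hτ => ?_)
          (hI.abs.const_mul M)
        rw [Real.norm_eq_abs, abs_mul, mul_comm]
        exact mul_le_mul_of_nonneg_right (hf τ hτ) (abs_nonneg _)
    _ = M * ∫ x in t - b..t - a, |h x| := by
        rw [intervalIntegral.integral_const_mul,
          intervalIntegral.integral_comp_sub_left (fun x => |h x|)]
    _ ≤ M * ∫ x in Ici (t - b), |h x| := by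
        gcongr
        rw [intervalIntegral.integral_of_le (by linarith)]
        exact setIntegral_mono_set (IntegrableOn.mono_set hh.abs (Ici_subset_Ici.2 (by linarith)))
          (ae_of_all _ fun x => abs_nonneg _)
          (Ioc_subset_Ioi_self.trans Ioi_subset_Ici_self).eventuallyLE

lemma intervalIntegrable_comp_sub_mul_of_bounded (hh : IntegrableOn h (Ici 0))
    (hf : AEStronglyMeasurable f) (hab : a ≤ b) (hbt : b ≤ t) (hM : ∀ τ ∈ Ioc a b, |f τ| ≤ M) :
    IntervalIntegrable (fun τ => h (t - τ) * f τ) volume a b := by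
  have hI := intervalIntegrable_comp_sub_of_integrableOn_Ici hh hab hbt
  rw [intervalIntegrable_iff_integrableOn_Ioc_of_le hab] at hI ⊢
  exact hI.mul_bdd hf.restrict ((ae_restrict_iff' measurableSet_Ioc).2 (ae_of_all _ hM))

lemma abs_intervalIntegral_comp_sub_mul_le_add (hh : IntegrableOn h (Ici 0))
    (hf : AEStronglyMeasurable f) (hs : 0 ≤ s) (hst : s ≤ t) (hM : ∀ τ ∈ Icc 0 t, |f τ| ≤ M)
    (hm : ∀ τ ∈ Icc s t, |f τ| ≤ m) :
    |∫ τ in 0..t, h (t - τ) * f τ| ≤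
      M * (∫ x in Ici (t - s), |h x|) + m * ∫ x in Ici 0, |h x| := by
  have hM0 : 0 ≤ M := (abs_nonneg _).trans (hM 0 ⟨le_rfl, hs.trans hst⟩)
  have hm0 : 0 ≤ m := (abs_nonneg _).trans (hm s ⟨le_rfl, hst⟩)
  have hM' : ∀ τ ∈ Ioc 0 s, |f τ| ≤ M := fun τ hτ => hM τ ⟨hτ.1.le, hτ.2.trans hst⟩
  have hm' : ∀ τ ∈ Ioc s t, |f τ| ≤ m := fun τ hτ => hm τ (Ioc_subset_Icc_self hτ)
  rw [← intervalIntegral.integral_add_adjacent_intervals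
    (intervalIntegrable_comp_sub_mul_of_bounded hh hf hs hst hM')
    (intervalIntegrable_comp_sub_mul_of_bounded hh hf hst le_rfl hm')]
  have hfirst := abs_intervalIntegral_comp_sub_mul_le hh hs hst hM0 hM'
  have hsecond := abs_intervalIntegral_comp_sub_mul_le hh hst le_rfl hm0 hm'
  rw [sub_self] at hsecond
  exact (abs_add_le _ _).trans (add_le_add hfirst hsecond)

end ConvolutionBounds

lemma limsup_abs_le_of_eventually_le_of_tendsto {α : Type*} {F : Filter α} [F.NeBot]
    {f b : α → ℝ} {l : ℝ} (hfb : ∀ᶠ x in F, |f x| ≤ b x) (hb : Tendsto b F (𝓝 l)) :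
    limsup (fun x => |f x|) F ≤ l := by
  rw [← hb.limsup_eq]
  exact limsup_le_limsup hfb (isCoboundedUnder_le_of_le F fun x => abs_nonneg _)
    hb.isBoundedUnder_le

theorem stmt_11_general (C0 ρ ωo L : ℝ) (hρ : 0 < ρ) (hωo : 0 < ωo)
    (h ehom ef e : ℝ → ℝ)
    (hh : IntegrableOn h (Set.Ici 0))
    (hef : Measurable ef)
    (hhom : ∀ t, 0 ≤ t → |ehom t| ≤ C0 * Real.exp (-ρ * t))
    (hefb : ∀ τ, 0 ≤ τ → |ef τ| ≤ Real.exp (-ωo * τ) * |ef 0| + L / ωo)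
    (hconv : ∀ t, 0 ≤ t → e t = ehom t - ∫ τ in (0:ℝ)..t, h (t - τ) * ef τ) :
    Filter.limsup (fun t => |e t|) Filter.atTop ≤ (∫ t in Set.Ici (0:ℝ), |h t|) * (L / ωo) := by
  set N := ∫ t in Ici (0:ℝ), |h t|
  set B : ℝ → ℝ := fun τ => Real.exp (-ωo * τ) * |ef 0| + L / ωo
  have hB : Antitone B := fun τ τ' hττ' => by
    dsimp only [B]
    gcongr ?_ * _ + _
    exact Real.exp_le_exp.2 (by nlinarith)
  have hexp (r : ℝ) (hr : 0 < r) : Tendsto (fun t => Real.exp (-r * t)) atTop (𝓝 0) :=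
    Real.tendsto_exp_atBot.comp (tendsto_id.const_mul_atTop_of_neg (neg_neg_of_pos hr))
  have hhalf : Tendsto (fun t : ℝ => t / 2) atTop atTop := tendsto_id.atTop_div_const two_pos
  have hbound : ∀ᶠ t in atTop, |e t| ≤
      C0 * Real.exp (-ρ * t) + B 0 * (∫ x in Ici (t / 2), |h x|) + B (t / 2) * N := by
    filter_upwards [eventually_ge_atTop 0] with t ht
    have hconv_le := abs_intervalIntegral_comp_sub_mul_le_add hh hef.aestronglyMeasurable
      (s := t / 2) (t := t) (M := B 0) (m := B (t / 2)) (by linarith) (by linarith)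
      (fun τ hτ => (hefb τ hτ.1).trans (hB hτ.1))
      (fun τ hτ => (hefb τ (by linarith [hτ.1])).trans (hB hτ.1))
    rw [show t - t / 2 = t / 2 by ring] at hconv_le
    rw [hconv t ht]
    linarith [abs_sub (ehom t) (∫ τ in (0:ℝ)..t, h (t - τ) * ef τ), hhom t ht]
  have hlim : Tendsto (fun t => C0 * Real.exp (-ρ * t) + B 0 * (∫ x in Ici (t / 2), |h x|)
      + B (t / 2) * N) atTop (𝓝 (C0 * 0 + B 0 * 0 + (0 * |ef 0| + L / ωo) * N)) :=
    ((tendsto_const_nhds.mul (hexp ρ hρ)).add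
      (tendsto_const_nhds.mul (tendsto_integral_Ici_zero hhalf))).add
      ((((hexp ωo hωo).comp hhalf).mul_const _ |>.add_const _).mul_const _)
  refine (limsup_abs_le_of_eventually_le_of_tendsto hbound hlim).trans_eq ?_
  ring

theorem stmt_11 (C0 ρ ωo L : ℝ) (hC0 : 0 < C0) (hρ : 0 < ρ) (hωo : 0 < ωo) (hL : 0 ≤ L)
    (h ehom ef e : ℝ → ℝ)
    (hh : IntegrableOn h (Set.Ici 0))
    (hef : Measurable ef)
    (hhom : ∀ t, 0 ≤ t → |ehom t| ≤ C0 * Real.exp (-ρ * t))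
    (hefb : ∀ τ, 0 ≤ τ → |ef τ| ≤ Real.exp (-ωo * τ) * |ef 0| + L / ωo)
    (hconv : ∀ t, 0 ≤ t → e t = ehom t - ∫ τ in (0:ℝ)..t, h (t - τ) * ef τ) :
    Filter.limsup (fun t => |e t|) Filter.atTop ≤ (∫ t in Set.Ici (0:ℝ), |h t|) * (L / ωo) :=
  stmt_11_general C0 ρ ωo L hρ hωo h ehom ef e hh hef hhom hefb hconv
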